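/- Under the LEN setup applied to F := ∇f, where f : E → ℝ is convex and differentiable with L-Lipschitz derivative of the gradient map, assume M ≥ 4mL and let x* be a global minimizer of f (so ∇f(x*) = 0); set R := ‖z_0 − x*‖. Then for every integer T ≥ 1, the averaged output z_out := (Σ_{t=0}^{T−1} η_t z_{t+1/2}) / (Σ_{t=0}^{T−1} η_t) satisfies f(z_out) − f(x*) ≤ M·R³ / T^{3/2}. -/

import Mathlib

open scoped RealInnerProductSpace

lemma len_grad_ineq {E : Type*} [NormedAddCommGroup E] [InnerProductSpace ℝ E] [CompleteSpace E]
    {f : E → ℝ} (hconv : ConvexOn ℝ Set.univ f) {x g : E} (hg : HasGradientAt f g x) (y : E) :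
    f x + ⟪g, y - x⟫ ≤ f y := by
  have hfd : HasFDerivAt f (InnerProductSpace.toDual ℝ E g) x := hg
  set Lmap : ℝ → E := fun t => t • (y - x) + x with hL
  have hL0 : Lmap 0 = x := by simp [hL]
  have hL1 : Lmap 1 = y := by simp [hL]
  have hLd : HasDerivAt Lmap (y - x) 0 := by
    have := ((hasDerivAt_id (0:ℝ)).smul_const (y - x)).add_const x
    simp only [id_eq, one_smul] at this
    exact this
  have hfd' : HasFDerivAt f (InnerProductSpace.toDual ℝ E g) (Lmap 0) := hL0.symm ▸ hfd
  have hφd : HasDerivAt (f ∘ Lmap) ⟪g, y - x⟫ 0 := by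
    simpa [InnerProductSpace.toDual_apply_apply] using hfd'.comp_hasDerivAt 0 hLd
  have hφconv : ConvexOn ℝ Set.univ (f ∘ Lmap) := by
    have h := hconv.comp_affineMap
      ((LinearMap.toSpanSingleton ℝ E (y - x)).toAffineMap + AffineMap.const ℝ ℝ x)
    have he : ⇑((LinearMap.toSpanSingleton ℝ E (y - x)).toAffineMap + AffineMap.const ℝ ℝ x)
        = Lmap := by
      ext t; simp [hL, LinearMap.toSpanSingleton_apply]
    rw [he] at h
    simpa using h
  have hslope := hφconv.le_slope_of_hasDerivAt (Set.mem_univ (0:ℝ)) (Set.mem_univ (1:ℝ))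
    one_pos hφd
  rw [slope_def_field] at hslope
  simp only [hL0, hL1, Function.comp_apply] at hslope
  have : ⟪g, y - x⟫ ≤ f y - f x := by simpa using hslope
  linarith

lemma len_inner_ident {E : Type*} [NormedAddCommGroup E] [InnerProductSpace ℝ E]
    (a b c : E) : 2 * ⟪a - b, c⟫ = ‖a‖^2 - ‖b‖^2 - ‖a - c‖^2 + ‖c - b‖^2 := by
  rw [norm_sub_sq_real, norm_sub_sq_real, inner_sub_left, real_inner_comm c b]
  ring

lemma len_mem_segment_norm {E : Type*} [NormedAddCommGroup E] [InnerProductSpace ℝ E]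
    {a b x : E} (hx : x ∈ segment ℝ a b) : ‖x - a‖ ≤ ‖b - a‖ := by
  rcases hx with ⟨u, v, hu, hv, huv, rfl⟩
  have huv' : u = 1 - v := by linarith
  have : u • a + v • b - a = v • (b - a) := by
    rw [huv', sub_smul, one_smul, smul_sub]; abel
  rw [this, norm_smul]
  simp only [Real.norm_eq_abs, abs_of_nonneg hv]
  nlinarith [norm_nonneg (b - a)]

lemma len_taylor {E : Type*} [NormedAddCommGroup E] [InnerProductSpace ℝ E]
    {F : E → E} {F' : E → E →L[ℝ] E} {L : ℝ} (hL0 : 0 ≤ L)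
    (hdiff : ∀ x : E, HasFDerivAt F (F' x) x)
    (hLip : ∀ x y : E, ‖F' x - F' y‖ ≤ L * ‖x - y‖)
    (p a b : E) :
    ‖F b - F a - F' p (b - a)‖ ≤ L * (‖b - a‖ + ‖a - p‖) * ‖b - a‖ := by
  set G : E → E := fun x => F x - F' p x with hG
  have hGd : ∀ x ∈ segment ℝ a b, HasFDerivWithinAt G (F' x - F' p) (segment ℝ a b) x := by
    intro x hx
    exact (((hdiff x).sub ((F' p).hasFDerivAt)) : HasFDerivAt G (F' x - F' p) x).hasFDerivWithinAt
  have hbound : ∀ x ∈ segment ℝ a b, ‖F' x - F' p‖ ≤ L * (‖b - a‖ + ‖a - p‖) := by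
    intro x hx
    refine (hLip x p).trans ?_
    have h1 : ‖x - p‖ ≤ ‖x - a‖ + ‖a - p‖ := norm_sub_le_norm_sub_add_norm_sub x a p
    have h2 : ‖x - a‖ ≤ ‖b - a‖ := len_mem_segment_norm hx
    nlinarith
  have := (convex_segment a b).norm_image_sub_le_of_norm_hasFDerivWithin_le hGd hbound
    (left_mem_segment ℝ a b) (right_mem_segment ℝ a b)
  have hGe : G b - G a = F b - F a - F' p (b - a) := by
    simp [hG, map_sub]; abel
  rw [hGe] at this
  linarith [this]

lemma len_telescope {E : Type*} [NormedAddCommGroup E] (z : ℕ → E) (a b : ℕ) (h : a ≤ b) :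
    ‖z b - z a‖ ≤ ∑ s ∈ Finset.Ico a b, ‖z s - z (s+1)‖ := by
  have h1 := dist_le_range_sum_dist (fun i => z (a + i)) (b - a)
  simp only [Nat.add_zero] at h1
  rw [Nat.add_sub_cancel' h] at h1
  rw [Finset.sum_Ico_eq_sum_range]
  simp only [dist_eq_norm] at h1 ⊢
  rw [norm_sub_rev]
  convert h1 using 2 with i
  simp only [Nat.add_assoc]


set_option maxHeartbeats 1000000 in
/-- LEN applied to `F = ∇f` for convex `f`: the averaged output satisfies the
suboptimality bound `f(z_out) − f(x*) ≤ M R³ / T^{3/2}`. -/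
theorem len_convex_suboptimality_bound
    {E : Type*} [NormedAddCommGroup E] [InnerProductSpace ℝ E] [FiniteDimensional ℝ E]
    (f : E → ℝ) (hconv : ConvexOn ℝ Set.univ f)
    (F : E → E) (hgrad : ∀ x : E, HasGradientAt f (F x) x)
    (F' : E → E →L[ℝ] E) (L M : ℝ) (m : ℕ) (hm : 1 ≤ m)
    (hdiff : ∀ x : E, HasFDerivAt F (F' x) x)
    (hLip : ∀ x y : E, ‖F' x - F' y‖ ≤ L * ‖x - y‖)
    (hMpos : 0 < M) (hM : 4 * (m : ℝ) * L ≤ M)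
    (z w : ℕ → E) (η : ℕ → ℝ)
    (hne : ∀ t, w t ≠ z t)
    (hnewton : ∀ t, F (z t) + F' (z (m * (t / m))) (w t - z t)
        + (M * ‖w t - z t‖) • (w t - z t) = 0)
    (hη : ∀ t, η t = 1 / (M * ‖z t - w t‖))
    (hupdate : ∀ t, z (t + 1) = z t - η t • F (w t))
    (xstar : E) (hmin : ∀ y : E, f xstar ≤ f y) (hstar : F xstar = 0)
    (R : ℝ) (hR : R = ‖z 0 - xstar‖)
    (T : ℕ) (hT : 1 ≤ T)
    (zout : E)
    (hzout : zout = (∑ t ∈ Finset.range T, η t)⁻¹ • ∑ t ∈ Finset.range T, η t • w t) :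
    f zout - f xstar ≤ M * R ^ 3 / (T : ℝ) ^ ((3 : ℝ) / 2) := by
  haveI : CompleteSpace E := FiniteDimensional.complete ℝ E
  have hL0 : 0 ≤ L := by
    have h1 := hLip (z 0) (w 0)
    have h2 : (0:ℝ) < ‖z 0 - w 0‖ := norm_pos_iff.mpr (sub_ne_zero.mpr (hne 0).symm)
    nlinarith [norm_nonneg (F' (z 0) - F' (w 0))]
  set π : ℕ → ℕ := fun t => m * (t / m) with hπdef
  set r : ℕ → ℝ := fun t => ‖z t - w t‖ with hrdef
  set e : ℕ → ℝ := fun t => ‖w t - z (t + 1)‖ with hedef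
  have hr_pos : ∀ t, 0 < r t := fun t => norm_pos_iff.mpr (sub_ne_zero.mpr (hne t).symm)
  have hrz : ∀ t, ‖z t - w t‖ = r t := fun t => rfl
  have hrw : ∀ t, ‖w t - z t‖ = r t := fun t => norm_sub_rev (w t) (z t)
  have hη_pos : ∀ t, 0 < η t := by
    intro t; rw [hη t, hrz t]
    have := hr_pos t; positivity
  have hkey : ∀ t, e t ≤ (L / M) * (r t + ‖z t - z (π t)‖) := by
    intro t
    set X : E := F (z t) + F' (z (π t)) (w t - z t) with hX
    have h2 : (M * ‖w t - z t‖) • (w t - z t) = -X := by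
      exact eq_neg_of_add_eq_zero_right (hnewton t)
    have hfac : η t * (M * ‖w t - z t‖) = 1 := by
      rw [hη t, hrw t, hrz t]
      have := hr_pos t
      field_simp
    have key : w t - z t = η t • (-X) := by
      have h3 := congrArg (fun v => η t • v) h2
      rw [smul_smul, hfac, one_smul] at h3
      exact h3
    have hwz : w t - z (t+1) = η t • (F (w t) - X) := by
      calc w t - z (t+1) = (w t - z t) + η t • F (w t) := by rw [hupdate t]; abel
      _ = η t • (-X) + η t • F (w t) := by rw [key]
      _ = η t • (F (w t) - X) := by rw [← smul_add]; congr 1; abel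
    have htay : ‖F (w t) - X‖ ≤ L * (r t + ‖z t - z (π t)‖) * r t := by
      have h5 := len_taylor hL0 hdiff hLip (z (π t)) (z t) (w t)
      rw [hrw t] at h5
      calc ‖F (w t) - X‖ = ‖F (w t) - F (z t) - F' (z (π t)) (w t - z t)‖ := by
            rw [hX, sub_add_eq_sub_sub]
      _ ≤ L * (r t + ‖z t - z (π t)‖) * r t := h5
    calc e t = ‖η t • (F (w t) - X)‖ := by rw [hedef]; simp only; rw [hwz]
    _ = η t * ‖F (w t) - X‖ := by
        rw [norm_smul, Real.norm_eq_abs, abs_of_pos (hη_pos t)]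
    _ ≤ η t * (L * (r t + ‖z t - z (π t)‖) * r t) :=
        mul_le_mul_of_nonneg_left htay (hη_pos t).le
    _ = (L / M) * (r t + ‖z t - z (π t)‖) := by
        rw [hη t, hrz t]
        have h6 := hr_pos t
        field_simp
  -- block structure facts
  set S : ℕ → ℝ := fun t => ∑ s ∈ Finset.Icc (π t) t, r s with hSdef
  have hπ_le : ∀ t, π t ≤ t := fun t => Nat.mul_div_le t m
  have hπ_lt : ∀ t, t < π t + m := by
    intro t
    have h1 := Nat.div_add_mod t m
    have h2 : t % m < m := Nat.mod_lt t (by omega)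
    simp only [hπdef]
    omega
  have hπ_eq : ∀ s t, π t ≤ s → s ≤ t → π s = π t := by
    intro s t h1 h2
    simp only [hπdef] at h1 ⊢
    have ha : t / m ≤ s / m := (Nat.le_div_iff_mul_le (by omega)).mpr
      (by rwa [Nat.mul_comm] at h1)
    have hb : s / m ≤ t / m := Nat.div_le_div_right h2
    rw [le_antisymm hb ha]
  have hS_split : ∀ t, S t = (∑ s ∈ Finset.Ico (π t) t, r s) + r t := by
    intro t
    rw [hSdef]
    simp only
    rw [← Finset.Ico_add_one_right_eq_Icc, Finset.sum_Ico_succ_top (hπ_le t)]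
  have hS_nonneg : ∀ t, 0 ≤ S t := by
    intro t
    rw [hSdef]
    exact Finset.sum_nonneg fun s _ => (hr_pos s).le
  have hmR : (1:ℝ) ≤ (m:ℝ) := by exact_mod_cast hm
  have hLM : L / M ≤ 1 / (4*(m:ℝ)) := by
    rw [div_le_div_iff₀ hMpos (by positivity)]
    nlinarith
  have he : ∀ t, e t ≤ 1/(2*(m:ℝ)) * S t := by
    intro t
    induction t using Nat.strong_induction_on with
    | _ t ih =>
    have hD : ‖z t - z (π t)‖ ≤ ∑ s ∈ Finset.Ico (π t) t, (r s + e s) := by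
      calc ‖z t - z (π t)‖ ≤ ∑ s ∈ Finset.Ico (π t) t, ‖z s - z (s+1)‖ :=
        len_telescope z (π t) t (hπ_le t)
      _ ≤ ∑ s ∈ Finset.Ico (π t) t, (r s + e s) := by
          apply Finset.sum_le_sum
          intro s _
          calc ‖z s - z (s+1)‖ = ‖(z s - w s) + (w s - z (s+1))‖ := by congr 1; abel
          _ ≤ r s + e s := norm_add_le _ _
    have hcard : ((Finset.Ico (π t) t).card : ℝ) ≤ (m : ℝ) := by
      rw [Nat.card_Ico]
      exact_mod_cast (by have := hπ_lt t; omega : t - π t ≤ m)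
    have hIH : ∀ s ∈ Finset.Ico (π t) t, e s ≤ 1/(2*(m:ℝ)) * S t := by
      intro s hs
      rw [Finset.mem_Ico] at hs
      have h2 := ih s hs.2
      have hπs : π s = π t := hπ_eq s t hs.1 (le_of_lt hs.2)
      have hSle : S s ≤ S t := by
        rw [hSdef]
        simp only
        rw [hπs]
        apply Finset.sum_le_sum_of_subset_of_nonneg
        · exact Finset.Icc_subset_Icc_right (le_of_lt hs.2)
        · intro i _ _
          exact (hr_pos i).le
      calc e s ≤ 1/(2*(m:ℝ)) * S s := h2
      _ ≤ 1/(2*(m:ℝ)) * S t := by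
          apply mul_le_mul_of_nonneg_left hSle
          positivity
    have hsum_e : ∑ s ∈ Finset.Ico (π t) t, e s ≤ (m:ℝ) * (1/(2*(m:ℝ)) * S t) := by
      calc ∑ s ∈ Finset.Ico (π t) t, e s ≤ ∑ _s ∈ Finset.Ico (π t) t, (1/(2*(m:ℝ)) * S t) :=
        Finset.sum_le_sum hIH
      _ = ((Finset.Ico (π t) t).card : ℝ) * (1/(2*(m:ℝ)) * S t) := by
          rw [Finset.sum_const, nsmul_eq_mul]
      _ ≤ (m:ℝ) * (1/(2*(m:ℝ)) * S t) := by
          apply mul_le_mul_of_nonneg_right hcard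
          have := hS_nonneg t
          positivity
    have hhalf : (m:ℝ) * (1/(2*(m:ℝ)) * S t) = S t / 2 := by
      field_simp
    have hsplit : ∑ s ∈ Finset.Ico (π t) t, (r s + e s)
        = (∑ s ∈ Finset.Ico (π t) t, r s) + ∑ s ∈ Finset.Ico (π t) t, e s :=
      Finset.sum_add_distrib
    have h2 : r t + ‖z t - z (π t)‖ ≤ S t + S t / 2 := by
      have h3 := hS_split t
      linarith [hD, hsum_e, hhalf ▸ hsum_e, hsplit ▸ hD]
    calc e t ≤ (L/M) * (r t + ‖z t - z (π t)‖) := hkey t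
    _ ≤ 1/(4*(m:ℝ)) * (r t + ‖z t - z (π t)‖) :=
        mul_le_mul_of_nonneg_right hLM (by positivity)
    _ ≤ 1/(4*(m:ℝ)) * (S t + S t / 2) :=
        mul_le_mul_of_nonneg_left h2 (by positivity)
    _ ≤ 1/(2*(m:ℝ)) * S t := by
        rw [div_mul_eq_mul_div, div_mul_eq_mul_div, div_le_div_iff₀ (by positivity) (by positivity)]
        nlinarith [hS_nonneg t]
  -- squared bound
  have hesq : ∀ t, e t ^ 2 ≤ 1/(4*(m:ℝ)) * ∑ s ∈ Finset.Icc (π t) t, r s ^ 2 := by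
    intro t
    have he0 : 0 ≤ e t := norm_nonneg _
    have h1 : e t ^ 2 ≤ (1/(2*(m:ℝ)))^2 * S t ^ 2 := by
      have h := he t
      nlinarith [hS_nonneg t]
    have hcard : ((Finset.Icc (π t) t).card : ℝ) ≤ (m:ℝ) := by
      rw [Nat.card_Icc]
      exact_mod_cast (by have := hπ_lt t; have := hπ_le t; omega : t + 1 - π t ≤ m)
    have h3 : (0:ℝ) ≤ ∑ s ∈ Finset.Icc (π t) t, r s ^ 2 :=
      Finset.sum_nonneg fun s _ => sq_nonneg _
    have h2 : S t ^ 2 ≤ (m:ℝ) * ∑ s ∈ Finset.Icc (π t) t, r s ^ 2 := by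
      refine le_trans ?_ (mul_le_mul_of_nonneg_right hcard h3)
      rw [hSdef]
      exact sq_sum_le_card_mul_sum_sq
    calc e t ^ 2 ≤ (1/(2*(m:ℝ)))^2 * S t ^ 2 := h1
    _ ≤ (1/(2*(m:ℝ)))^2 * ((m:ℝ) * ∑ s ∈ Finset.Icc (π t) t, r s ^ 2) :=
        mul_le_mul_of_nonneg_left h2 (by positivity)
    _ = 1/(4*(m:ℝ)) * ∑ s ∈ Finset.Icc (π t) t, r s ^ 2 := by
        field_simp
        ring
  -- sum over range T of e², for arbitrary T
  have hsum_esq : ∀ T : ℕ, ∑ t ∈ Finset.range T, e t ^ 2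
      ≤ 1/4 * ∑ t ∈ Finset.range T, r t ^ 2 := by
    intro T
    have h1 : ∑ t ∈ Finset.range T, e t ^ 2
        ≤ 1/(4*(m:ℝ)) * ∑ t ∈ Finset.range T, ∑ s ∈ Finset.Icc (π t) t, r s ^ 2 := by
      rw [Finset.mul_sum]
      exact Finset.sum_le_sum fun t _ => hesq t
    have hswap : ∑ t ∈ Finset.range T, ∑ s ∈ Finset.Icc (π t) t, r s ^ 2
        = ∑ s ∈ Finset.range T, ∑ t ∈ (Finset.range T).filter (fun t => π t ≤ s ∧ s ≤ t),
            r s ^ 2 := by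
      apply Finset.sum_comm'
      intro t s
      simp only [Finset.mem_range, Finset.mem_Icc, Finset.mem_filter]
      constructor
      · rintro ⟨h1, h2, h3⟩
        exact ⟨⟨h1, h2, h3⟩, lt_of_le_of_lt h3 h1⟩
      · rintro ⟨⟨h1, h2, h3⟩, h4⟩
        exact ⟨h1, h2, h3⟩
    have h2 : ∀ s, ∑ t ∈ (Finset.range T).filter (fun t => π t ≤ s ∧ s ≤ t), r s ^ 2
        ≤ (m:ℝ) * r s ^ 2 := by
      intro s
      rw [Finset.sum_const, nsmul_eq_mul]
      apply mul_le_mul_of_nonneg_right _ (sq_nonneg _)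
      have hsub : (Finset.range T).filter (fun t => π t ≤ s ∧ s ≤ t) ⊆
          Finset.Icc s (s + (m-1)) := by
        intro t ht
        rw [Finset.mem_filter] at ht
        rw [Finset.mem_Icc]
        have := hπ_lt t
        omega
      have := Finset.card_le_card hsub
      rw [Nat.card_Icc] at this
      have hm1 : s + (m-1) + 1 - s = m := by omega
      rw [hm1] at this
      exact_mod_cast this
    calc ∑ t ∈ Finset.range T, e t ^ 2
        ≤ 1/(4*(m:ℝ)) * ∑ t ∈ Finset.range T, ∑ s ∈ Finset.Icc (π t) t, r s ^ 2 := h1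
    _ ≤ 1/(4*(m:ℝ)) * ∑ s ∈ Finset.range T, (m:ℝ) * r s ^ 2 := by
        apply mul_le_mul_of_nonneg_left _ (by positivity)
        rw [hswap]
        exact Finset.sum_le_sum fun s _ => h2 s
    _ = 1/4 * ∑ t ∈ Finset.range T, r t ^ 2 := by
        rw [← Finset.mul_sum, ← mul_assoc]
        congr 1
        field_simp
  -- per-step inner product identity
  have hid : ∀ t, 2 * (η t * ⟪F (w t), w t - xstar⟫) =
      ‖z t - xstar‖^2 - ‖z (t+1) - xstar‖^2 - r t ^ 2 + e t ^ 2 := by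
    intro t
    have h1 : z t - z (t+1) = η t • F (w t) := by rw [hupdate t]; abel
    have h2 : η t * ⟪F (w t), w t - xstar⟫
        = ⟪(z t - xstar) - (z (t+1) - xstar), w t - xstar⟫ := by
      have h0 : (z t - xstar) - (z (t+1) - xstar) = z t - z (t+1) := by abel
      rw [h0, h1, real_inner_smul_left]
    have h3 := len_inner_ident (z t - xstar) (z (t+1) - xstar) (w t - xstar)
    have e1 : (z t - xstar) - (w t - xstar) = z t - w t := by abel
    have e2 : (w t - xstar) - (z (t+1) - xstar) = w t - z (t+1) := by abel
    rw [e1, e2] at h3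
    rw [h2, h3]
  -- convexity inequalities
  have hfw : ∀ t, f (w t) - f xstar ≤ ⟪F (w t), w t - xstar⟫ := by
    intro t
    have h := len_grad_ineq hconv (hgrad (w t)) xstar
    have hneg : ⟪F (w t), xstar - w t⟫ = -⟪F (w t), w t - xstar⟫ := by
      rw [← inner_neg_right]
      congr 1
      abel
    rw [hneg] at h
    linarith
  have hip_nonneg : ∀ t, 0 ≤ ⟪F (w t), w t - xstar⟫ := by
    intro t
    have := hmin (w t)
    linarith [hfw t]
  -- summed identity
  have htel : ∑ t ∈ Finset.range T, (‖z t - xstar‖^2 - ‖z (t+1) - xstar‖^2)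
      = ‖z 0 - xstar‖^2 - ‖z T - xstar‖^2 :=
    Finset.sum_range_sub' (fun t => ‖z t - xstar‖^2) T
  set Q : ℝ := ∑ t ∈ Finset.range T, r t ^ 2 with hQdef
  have hsumid : 2 * ∑ t ∈ Finset.range T, η t * ⟪F (w t), w t - xstar⟫
      = ‖z 0 - xstar‖^2 - ‖z T - xstar‖^2 - Q + ∑ t ∈ Finset.range T, e t ^ 2 := by
    rw [Finset.mul_sum]
    calc ∑ t ∈ Finset.range T, 2 * (η t * ⟪F (w t), w t - xstar⟫)
        = ∑ t ∈ Finset.range T, ((‖z t - xstar‖^2 - ‖z (t+1) - xstar‖^2) - r t ^ 2 + e t ^ 2) := by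
          exact Finset.sum_congr rfl fun t _ => (hid t).trans (by ring)
    _ = ‖z 0 - xstar‖^2 - ‖z T - xstar‖^2 - Q + ∑ t ∈ Finset.range T, e t ^ 2 := by
        rw [Finset.sum_add_distrib, Finset.sum_sub_distrib, htel]
  have hesqT := hsum_esq T
  have hznonneg : (0:ℝ) ≤ ‖z T - xstar‖^2 := sq_nonneg _
  have hsum_ip_nonneg : 0 ≤ ∑ t ∈ Finset.range T, η t * ⟪F (w t), w t - xstar⟫ :=
    Finset.sum_nonneg fun t _ => mul_nonneg (hη_pos t).le (hip_nonneg t)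
  have hR2 : ‖z 0 - xstar‖^2 = R^2 := by rw [hR]
  have hQnonneg : (0:ℝ) ≤ ∑ t ∈ Finset.range T, r t ^ 2 :=
    Finset.sum_nonneg fun t _ => sq_nonneg _
  have hQle : Q ≤ 4 * R^2 := by
    linarith [hsumid, hesqT, hznonneg, hsum_ip_nonneg, hR2, hQdef.le, hQdef.ge,
      sq_nonneg R, hQnonneg]
  have hsum_ip_le : ∑ t ∈ Finset.range T, η t * ⟪F (w t), w t - xstar⟫ ≤ R^2 / 2 := by
    linarith [hsumid, hesqT, hznonneg, hR2, hQdef.le, hQdef.ge, hQnonneg]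
  -- Jensen
  set W : ℝ := ∑ t ∈ Finset.range T, η t with hWdef
  have hWpos : 0 < W :=
    Finset.sum_pos (fun t _ => hη_pos t) (Finset.nonempty_range_iff.mpr (by omega))
  have hjen : f zout ≤ W⁻¹ * ∑ t ∈ Finset.range T, η t * f (w t) := by
    have h := hconv.map_centerMass_le (t := Finset.range T) (w := η) (p := w)
      (fun t _ => (hη_pos t).le) hWpos (fun t _ => Set.mem_univ _)
    have hcm : (Finset.range T).centerMass η w = zout := by
      rw [hzout]
      rfl
    rw [hcm] at h
    refine h.trans_eq ?_
    simp only [Finset.centerMass, Function.comp, smul_eq_mul, Finset.mul_sum]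
    rfl
  have hsum_f_le : ∑ t ∈ Finset.range T, η t * (f (w t) - f xstar) ≤ R^2/2 := by
    refine le_trans (Finset.sum_le_sum fun t _ => ?_) hsum_ip_le
    exact mul_le_mul_of_nonneg_left (hfw t) (hη_pos t).le
  have hexp : ∑ t ∈ Finset.range T, η t * (f (w t) - f xstar)
      = (∑ t ∈ Finset.range T, η t * f (w t)) - W * f xstar := by
    rw [hWdef, Finset.sum_mul]
    rw [← Finset.sum_sub_distrib]
    apply Finset.sum_congr rfl
    intro t _
    ring
  have hfinal1 : f zout - f xstar ≤ W⁻¹ * (R^2/2) := by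
    have hW1 : W⁻¹ * W = 1 := inv_mul_cancel₀ (ne_of_gt hWpos)
    have h := hjen
    have h2 : W⁻¹ * ∑ t ∈ Finset.range T, η t * f (w t)
        = W⁻¹ * (∑ t ∈ Finset.range T, η t * (f (w t) - f xstar)) + f xstar := by
      rw [hexp, mul_sub, ← mul_assoc, hW1, one_mul]
      ring
    have h3 : W⁻¹ * (∑ t ∈ Finset.range T, η t * (f (w t) - f xstar)) ≤ W⁻¹ * (R^2/2) :=
      mul_le_mul_of_nonneg_left hsum_f_le (inv_nonneg.mpr hWpos.le)
    linarith
  -- Cauchy-Schwarz lower bound on W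
  set A : ℝ := ∑ t ∈ Finset.range T, (1 / r t) with hAdef
  set B : ℝ := ∑ t ∈ Finset.range T, r t with hBdef
  have hApos : 0 < A :=
    Finset.sum_pos (fun t _ => one_div_pos.mpr (hr_pos t))
      (Finset.nonempty_range_iff.mpr (by omega))
  have hBpos : 0 < B :=
    Finset.sum_pos (fun t _ => hr_pos t) (Finset.nonempty_range_iff.mpr (by omega))
  have hQpos : 0 < Q :=
    Finset.sum_pos (fun t _ => pow_pos (hr_pos t) 2)
      (Finset.nonempty_range_iff.mpr (by omega))
  have hRpos : 0 < R := by
    rcases lt_or_eq_of_le (by rw [hR]; exact norm_nonneg _ : (0:ℝ) ≤ R) with h | h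
    · exact h
    · exfalso
      rw [← h] at hQle
      norm_num at hQle
      linarith
  have hcs1 : ((T:ℝ))^2 ≤ A * B := by
    have h := Finset.sum_mul_sq_le_sq_mul_sq (Finset.range T)
      (fun t => 1 / Real.sqrt (r t)) (fun t => Real.sqrt (r t))
    have e1 : ∑ t ∈ Finset.range T, (1 / Real.sqrt (r t)) * Real.sqrt (r t) = (T:ℝ) := by
      rw [Finset.sum_congr rfl (g := fun _ => (1:ℝ)) fun t _ => ?_]
      · simp
      · have := hr_pos t
        have hs : Real.sqrt (r t) ≠ 0 := by positivity
        field_simp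
    have e2 : ∑ t ∈ Finset.range T, (1 / Real.sqrt (r t))^2 = A := by
      apply Finset.sum_congr rfl
      intro t _
      rw [div_pow, one_pow, Real.sq_sqrt (hr_pos t).le]
    have e3 : ∑ t ∈ Finset.range T, (Real.sqrt (r t))^2 = B := by
      apply Finset.sum_congr rfl
      intro t _
      rw [Real.sq_sqrt (hr_pos t).le]
    rw [e1, e2, e3] at h
    exact h
  have hcs2 : B^2 ≤ (T:ℝ) * Q := by
    have h := sq_sum_le_card_mul_sum_sq (s := Finset.range T) (f := r)
    rwa [Finset.card_range] at h
  have hWA : W = A / M := by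
    rw [hWdef, hAdef, Finset.sum_div]
    apply Finset.sum_congr rfl
    intro t _
    rw [hη t, hrz t, one_div, mul_inv_rev, one_div, div_eq_mul_inv]
  -- final arithmetic
  have hTR : (1:ℝ) ≤ (T:ℝ) := by exact_mod_cast hT
  set su : ℝ := Real.sqrt (T:ℝ) with hsudef
  have hsu_pos : 0 < su := Real.sqrt_pos.mpr (by linarith)
  have hsu_sq : su^2 = (T:ℝ) := Real.sq_sqrt (by linarith)
  have hrpow : (T:ℝ) ^ ((3:ℝ)/2) = su^3 := by
    rw [hsudef, Real.sqrt_eq_rpow, ← Real.rpow_natCast ((T:ℝ) ^ ((1:ℝ)/2)) 3,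
      ← Real.rpow_mul (by linarith)]
    norm_num
  have hsqQ : Real.sqrt Q ≤ 2 * R := by
    calc Real.sqrt Q ≤ Real.sqrt ((2*R)^2) := Real.sqrt_le_sqrt (by nlinarith)
    _ = 2 * R := Real.sqrt_sq (by positivity)
  have hBle : B ≤ su * (2 * R) := by
    have h1 : B = Real.sqrt (B^2) := (Real.sqrt_sq hBpos.le).symm
    calc B = Real.sqrt (B^2) := h1
    _ ≤ Real.sqrt ((T:ℝ) * Q) := Real.sqrt_le_sqrt hcs2
    _ = su * Real.sqrt Q := Real.sqrt_mul (by linarith) Q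
    _ ≤ su * (2 * R) := mul_le_mul_of_nonneg_left hsqQ hsu_pos.le
  have hsu3 : su^3 ≤ 2 * A * R := by
    have h1 : su^4 ≤ A * (su * (2*R)) := by
      calc su^4 = ((T:ℝ))^2 := by rw [← hsu_sq]; ring
      _ ≤ A * B := hcs1
      _ ≤ A * (su * (2*R)) := mul_le_mul_of_nonneg_left hBle hApos.le
    nlinarith
  -- conclude
  rw [hrpow]
  have hW_inv : W⁻¹ = M / A := by
    rw [hWA, inv_div]
  rw [hW_inv] at hfinal1
  have hgoal : M / A * (R^2/2) ≤ M * R^3 / su^3 := by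
    rw [div_mul_eq_mul_div, div_le_div_iff₀ hApos (by positivity)]
    nlinarith [mul_pos (mul_pos hMpos hRpos) (mul_pos hRpos hRpos)]
  linarith
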